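/- arXiv:1304.5625 — 4 statements merged into one kernel-verified Lean document; each statement's English description precedes it below -/
import Mathlib

section
/- Let 0 < ε' ≤ 1/8, λ = ⌈log₂(3/8 + 1/(48ε'))⌉ and l = λ+2. Define a_i = max{1/3 − 2ε' + (1/12 + (3/2)ε')·2^{−(λ+1−i)}, 1/3 + 2ε'} and b_i = 1/3 − 2ε' + (1/12 + (3/2)ε')·2^{−(λ−i)} for 1 ≤ i ≤ l. Then a_1 = 1/3 + 2ε' and a_i < b_i for all 1 ≤ i ≤ l, and the union of the intervals (a_i, b_i] for i = 1,…,l equals (1/3 + 2ε', 2/3 + 4ε']. -/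
theorem stmt7 (ε' : ℝ) (h1 : 0 < ε') (h2 : ε' ≤ 1 / 8)
    (lam : ℤ) (hlam : lam = ⌈Real.logb 2 (3 / 8 + 1 / (48 * ε'))⌉)
    (l : ℤ) (hl : l = lam + 2)
    (a b : ℤ → ℝ)
    (ha : ∀ i : ℤ, 1 ≤ i → i ≤ l →
      a i = max (1 / 3 - 2 * ε' + (1 / 12 + (3 / 2) * ε') * (2 : ℝ) ^ (-(lam + 1 - i)))
              (1 / 3 + 2 * ε'))
    (hb : ∀ i : ℤ, 1 ≤ i → i ≤ l →
      b i = 1 / 3 - 2 * ε' + (1 / 12 + (3 / 2) * ε') * (2 : ℝ) ^ (-(lam - i))) :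
    a 1 = 1 / 3 + 2 * ε' ∧
    (∀ i : ℤ, 1 ≤ i → i ≤ l → a i < b i) ∧
    (⋃ i ∈ Finset.Icc (1 : ℤ) l, Set.Ioc (a i) (b i)) =
      Set.Ioc (1 / 3 + 2 * ε') (2 / 3 + 4 * ε') := by
  set c : ℝ := 1 / 12 + (3 / 2) * ε' with hcdef
  set X : ℝ := 3 / 8 + 1 / (48 * ε') with hXdef
  clear_value c X
  have hε48 : (0:ℝ) < 48 * ε' := by linarith
  have hXpos : 0 < X := by rw [hXdef]; positivity
  have hXhalf : (1:ℝ)/2 < X := by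
    have : (1:ℝ)/6 ≤ 1 / (48 * ε') := by
      rw [div_le_div_iff₀ (by norm_num) hε48]; linarith
    rw [hXdef]; linarith
  have hcpos : 0 < c := by rw [hcdef]; positivity
  have hcX : c = 4 * ε' * X := by
    rw [hcdef, hXdef]; field_simp; ring
  -- bounds on 2^lam
  have hlogX : (2:ℝ) ^ (Real.logb 2 X) = X := Real.rpow_logb (by norm_num) (by norm_num) hXpos
  have hzr : ((2:ℝ) ^ lam : ℝ) = (2:ℝ) ^ (lam : ℝ) := (Real.rpow_intCast 2 lam).symm
  have h_up : X ≤ (2:ℝ) ^ lam := by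
    have := Real.rpow_le_rpow_of_exponent_le (by norm_num : (1:ℝ) ≤ 2)
      (hlam ▸ Int.le_ceil (Real.logb 2 X))
    rw [hlogX] at this
    rw [hzr]; exact this
  have h_lo : (2:ℝ) ^ lam < 2 * X := by
    have h1' : (lam : ℝ) < Real.logb 2 X + 1 := hlam ▸ Int.ceil_lt_add_one _
    calc (2:ℝ) ^ lam = (2:ℝ) ^ (lam:ℝ) := hzr
      _ < (2:ℝ) ^ (Real.logb 2 X + 1) :=
          Real.rpow_lt_rpow_of_exponent_lt (by norm_num : (1:ℝ) < 2) h1'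
      _ = 2 * X := by
          rw [Real.rpow_add (by norm_num), hlogX, Real.rpow_one]; ring
  have hlam0 : 0 ≤ lam := by
    have : (-1:ℝ) < Real.logb 2 X := by
      have := Real.logb_lt_logb (b := 2) (by norm_num) (by norm_num : (0:ℝ) < 1/2) hXhalf
      have h12 : Real.logb 2 (1/2 : ℝ) = -1 := by
        rw [show (1/2 : ℝ) = 2⁻¹ by norm_num, Real.logb_inv, Real.logb_self_eq_one] <;>
          norm_num
      linarith [h12 ▸ this]
    have : (-1 : ℤ) < lam := by
      rw [hlam, Int.lt_ceil]; push_cast; linarith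
    omega
  have hl1 : 1 ≤ l := by omega
  have hzpos : ∀ m : ℤ, (0:ℝ) < (2:ℝ) ^ m := fun m => zpow_pos (by norm_num) m
  -- key inequalities
  have key1 : c * (2:ℝ) ^ (-lam) ≤ 4 * ε' := by
    have := mul_le_mul_of_nonneg_right h_up (le_of_lt (hzpos (-lam)))
    have h2l : (2:ℝ) ^ lam * (2:ℝ) ^ (-lam) = 1 := by
      rw [← zpow_add₀ (by norm_num : (2:ℝ) ≠ 0)]; simp
    rw [hcX]
    calc 4 * ε' * X * (2:ℝ) ^ (-lam) ≤ 4 * ε' * ((2:ℝ)^lam * (2:ℝ)^(-lam)) := by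
          rw [mul_assoc]; nlinarith [hzpos (-lam)]
      _ = 4 * ε' := by rw [h2l]; ring
  have key2 : 4 * ε' < c * (2:ℝ) ^ (1 - lam) := by
    have h2l : (2:ℝ) ^ lam * (2:ℝ) ^ (1 - lam) = 2 := by
      rw [← zpow_add₀ (by norm_num : (2:ℝ) ≠ 0)]; norm_num
    rw [hcX]
    have := mul_lt_mul_of_pos_right h_lo (hzpos (1 - lam))
    rw [h2l] at this
    nlinarith [hzpos (1 - lam)]
  -- a 1
  have ha1 : a 1 = 1 / 3 + 2 * ε' := by
    rw [ha 1 le_rfl hl1, show -(lam + 1 - 1) = -lam from by ring]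
    exact max_eq_right (by linarith [key1])
  -- b is increasing, b i > 1/3 + 2ε' for i ≥ 1
  have hbval : ∀ i : ℤ, 1 ≤ i → i ≤ l → b i = 1/3 - 2*ε' + c * (2:ℝ)^(i - lam) := by
    intro i hi hil
    rw [hb i hi hil, show -(lam - i) = i - lam from by ring]
  have hbgt : ∀ i : ℤ, 1 ≤ i → i ≤ l → 1/3 + 2*ε' < b i := by
    intro i hi hil
    rw [hbval i hi hil]
    have hm : (2:ℝ)^(1 - lam) ≤ (2:ℝ)^(i - lam) :=
      zpow_le_zpow_right₀ (by norm_num) (by omega)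
    nlinarith [key2, mul_le_mul_of_nonneg_left hm (le_of_lt hcpos)]
  have hbmono : ∀ i j : ℤ, 1 ≤ i → i ≤ j → j ≤ l → b i ≤ b j := by
    intro i j hi hij hjl
    rw [hbval i hi (le_trans hij hjl), hbval j (le_trans hi hij) hjl]
    have : (2:ℝ)^(i - lam) ≤ (2:ℝ)^(j - lam) :=
      zpow_le_zpow_right₀ (by norm_num) (by omega)
    nlinarith [mul_le_mul_of_nonneg_left this (le_of_lt hcpos)]
  -- a i < b i
  have haib : ∀ i : ℤ, 1 ≤ i → i ≤ l → a i < b i := by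
    intro i hi hil
    rw [ha i hi hil]
    apply max_lt _ (hbgt i hi hil)
    rw [hbval i hi hil, show -(lam + 1 - i) = (i - lam) - 1 from by ring]
    have h' : (2:ℝ) ^ (i - lam - 1) < (2:ℝ) ^ (i - lam) :=
      zpow_lt_zpow_right₀ (by norm_num) (by omega)
    nlinarith [mul_lt_mul_of_pos_left h' hcpos]
  -- chain: a (i+1) = b i
  have hchain : ∀ i : ℤ, 1 ≤ i → i ≤ l - 1 → a (i + 1) = b i := by
    intro i hi hil
    rw [ha (i+1) (by omega) (by omega),
      show -(lam + 1 - (i+1)) = -(lam - i) from by ring, ← hb i hi (by omega)]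
    exact max_eq_left (le_of_lt (hbgt i hi (by omega)))
  -- b l
  have hbl : b l = 2 / 3 + 4 * ε' := by
    rw [hbval l hl1 le_rfl, show l - lam = 2 by omega]
    norm_num [hcdef]; ring
  refine ⟨ha1, haib, ?_⟩
  ext x
  simp only [Set.mem_iUnion, Set.mem_Ioc, Finset.mem_Icc, exists_prop]
  constructor
  · rintro ⟨i, ⟨hi1, hil⟩, hx1, hx2⟩
    have hle : 1/3 + 2*ε' ≤ a i := by
      rw [ha i hi1 hil]; exact le_max_right _ _
    exact ⟨lt_of_le_of_lt hle hx1, le_trans hx2 (hbl ▸ hbmono i l hi1 hil le_rfl)⟩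
  · rintro ⟨hx1, hx2⟩
    have main : ∀ n : ℕ, 1 + (n:ℤ) ≤ l → x ≤ b (1 + n) →
        ∃ i, (1 ≤ i ∧ i ≤ l) ∧ a i < x ∧ x ≤ b i := by
      intro n
      induction n with
      | zero =>
        intro hn hxb
        exact ⟨1, ⟨le_rfl, hl1⟩, by rw [ha1]; simpa using hx1, by simpa using hxb⟩
      | succ n ih =>
        intro hn hxb
        have hn0 : (0:ℤ) ≤ (n:ℤ) := Int.natCast_nonneg n
        have e : ((1:ℤ) + ((n:ℕ)+1 : ℕ)) = 1 + (n:ℤ) + 1 := by push_cast; ring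
        have hn' : 1 + (n:ℤ) + 1 ≤ l := by rw [← e]; exact_mod_cast hn
        rw [e] at hxb
        by_cases hcase : x ≤ b (1 + (n:ℤ))
        · exact ih (by omega) (by exact_mod_cast hcase)
        · push_neg at hcase
          refine ⟨1 + (n:ℤ) + 1, ⟨by omega, by omega⟩, ?_, hxb⟩
          rw [hchain (1 + (n:ℤ)) (by omega) (by omega)]
          exact hcase
    have hln : 1 + ((l - 1).toNat : ℤ) = l := by omega
    obtain ⟨i, hi, hxi⟩ := main (l - 1).toNat (by omega) (by rw [hln, hbl]; exact hx2)
    exact ⟨i, hi, hxi⟩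
end

section
/- Let jobs have processing times in (0,1] and consider a schedule on m machines with makespan at most 1. Call a job 'mid' if its processing time lies in (1/3 + 2ε', 2/3 + 4ε'] and 'big' if its processing time exceeds 2/3 + 4ε', where 0 < ε' ≤ 1/8. Then each machine contains at most 2 mid jobs and no machine contains both a big job and any other mid or big job; consequently, if n₁ is the number of mid jobs and n₂ the number of big jobs, then ⌈n₁/2⌉ + n₂ ≤ m. -/
/-!
Write `a = 1/3 + 2ε'`, so that mid jobs have size in `(a, 2a]` and big jobs size above `2a`.
Charge one slot to a mid job and two to a big job: every job then has size more than `a` times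
its number of slots, while a machine has capacity `1 ≤ 3a`, so no machine carries three slots.
Summing over the `m` machines gives `n₁ + 2 n₂ ≤ 2m`.
-/

open Finset

noncomputable def jobSlots (a x : ℝ) : ℕ :=
  (if a < x ∧ x ≤ 2 * a then 1 else 0) + 2 * (if 2 * a < x then 1 else 0)

lemma mul_jobSlots_lt {a x : ℝ} (h : jobSlots a x ≠ 0) : a * jobSlots a x < x := by
  unfold jobSlots at *
  split_ifs at * <;> norm_num at * <;> linarith

lemma mul_jobSlots_le {a x : ℝ} (hx : 0 ≤ x) : a * jobSlots a x ≤ x := by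
  by_cases h : jobSlots a x = 0
  · simpa [h] using hx
  · exact (mul_jobSlots_lt h).le

lemma sum_jobSlots_le_two {ι : Type*} {s : Finset ι} {p : ι → ℝ} {a : ℝ} (ha : 1 ≤ 3 * a)
    (hp : ∀ i ∈ s, 0 ≤ p i) (hs : ∑ i ∈ s, p i ≤ 1) : ∑ i ∈ s, jobSlots a (p i) ≤ 2 := by
  by_contra! h
  obtain ⟨i, hi, hslot⟩ := exists_ne_zero_of_sum_ne_zero (by omega : ∑ i ∈ s, jobSlots a (p i) ≠ 0)
  have hlt : a * ∑ i ∈ s, (jobSlots a (p i) : ℝ) < ∑ i ∈ s, p i := by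
    rw [mul_sum]
    exact sum_lt_sum (fun j hj => mul_jobSlots_le (hp j hj)) ⟨i, hi, mul_jobSlots_lt hslot⟩
  have h3 : (3 : ℝ) ≤ ∑ i ∈ s, (jobSlots a (p i) : ℝ) := by exact_mod_cast h
  nlinarith

section Schedule

variable {ι κ : Type*} [Fintype ι] [DecidableEq κ] {f : ι → κ} {p : ι → ℝ} {a : ℝ}

lemma sum_le_load {s : Finset ι} {j : κ} (hp : ∀ i, 0 ≤ p i) (hs : ∀ i ∈ s, f i = j) :
    ∑ i ∈ s, p i ≤ ∑ i with f i = j, p i :=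
  sum_le_sum_of_subset_of_nonneg (fun i hi => by simp [hs i hi]) fun i _ _ => hp i

variable (ha : 1 ≤ 3 * a) (hp : ∀ i, 0 ≤ p i) (hload : ∀ j, ∑ i with f i = j, p i ≤ 1)
include ha hp hload

lemma sum_jobSlots_fiber_le_two (j : κ) : ∑ i with f i = j, jobSlots a (p i) ≤ 2 :=
  sum_jobSlots_le_two ha (fun i _ => hp i) (hload j)

lemma card_mid_fiber_le_two (j : κ) :
    #{i | f i = j ∧ a < p i ∧ p i ≤ 2 * a} ≤ 2 := by
  refine le_trans ?_ (sum_jobSlots_fiber_le_two ha hp hload j)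
  rw [← filter_filter, card_filter]
  exact sum_le_sum fun i _ => Nat.le_add_right _ _

lemma not_lt_of_big_of_same_machine [DecidableEq ι] {i i' : ι} (hi : f i = f i')
    (hbig : 2 * a < p i) (hne : i ≠ i') : ¬ a < p i' := by
  intro hi'
  have hpair := (sum_le_load hp (s := {i, i'}) (j := f i) (by simp [hi])).trans (hload (f i))
  rw [sum_pair hne] at hpair
  linarith

lemma card_mid_add_two_mul_card_big_le [Fintype κ] :
    #{i | a < p i ∧ p i ≤ 2 * a} + 2 * #{i | 2 * a < p i} ≤ 2 * Fintype.card κ := by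
  calc #{i | a < p i ∧ p i ≤ 2 * a} + 2 * #{i | 2 * a < p i}
      = ∑ i, jobSlots a (p i) := by
        simp only [jobSlots, sum_add_distrib, ← mul_sum, card_filter]
    _ = ∑ j, ∑ i with f i = j, jobSlots a (p i) := (sum_fiberwise _ _ _).symm
    _ ≤ ∑ _j : κ, 2 := sum_le_sum fun j _ => sum_jobSlots_fiber_le_two ha hp hload j
    _ = 2 * Fintype.card κ := by simp [mul_comm]

end Schedule

theorem stmt8_general (ε' : ℝ) (h1 : 0 < ε')
    (m n : ℕ) (p : Fin n → ℝ) (hp : ∀ t, 0 < p t ∧ p t ≤ 1)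
    (f : Fin n → Fin m)
    (hmakespan : ∀ j : Fin m, ∑ t ∈ Finset.univ.filter (fun t => f t = j), p t ≤ 1) :
    (∀ j : Fin m,
        (Finset.univ.filter
          (fun t => f t = j ∧ 1 / 3 + 2 * ε' < p t ∧ p t ≤ 2 / 3 + 4 * ε')).card ≤ 2) ∧
    (∀ j : Fin m, ∀ t t' : Fin n, f t = j → f t' = j → 2 / 3 + 4 * ε' < p t → t ≠ t' →
        ¬ (1 / 3 + 2 * ε' < p t')) ∧
    ((Finset.univ.filter
        (fun t => 1 / 3 + 2 * ε' < p t ∧ p t ≤ 2 / 3 + 4 * ε')).card + 1) / 2 +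
      (Finset.univ.filter (fun t => 2 / 3 + 4 * ε' < p t)).card ≤ m := by
  have ha : 1 ≤ 3 * (1 / 3 + 2 * ε') := by linarith
  have hp0 : ∀ t, 0 ≤ p t := fun t => (hp t).1.le
  rw [show 2 / 3 + 4 * ε' = 2 * (1 / 3 + 2 * ε') by ring]
  refine ⟨card_mid_fiber_le_two ha hp0 hmakespan,
    fun _ t t' ht ht' => not_lt_of_big_of_same_machine ha hp0 hmakespan (ht.trans ht'.symm), ?_⟩
  have hslots := card_mid_add_two_mul_card_big_le ha hp0 hmakespan (f := f)
  rw [Fintype.card_fin] at hslots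
  omega

theorem stmt8 (ε' : ℝ) (h1 : 0 < ε') (h2 : ε' ≤ 1 / 8)
    (m n : ℕ) (p : Fin n → ℝ) (hp : ∀ t, 0 < p t ∧ p t ≤ 1)
    (f : Fin n → Fin m)
    (hmakespan : ∀ j : Fin m, ∑ t ∈ Finset.univ.filter (fun t => f t = j), p t ≤ 1) :
    (∀ j : Fin m,
        (Finset.univ.filter
          (fun t => f t = j ∧ 1 / 3 + 2 * ε' < p t ∧ p t ≤ 2 / 3 + 4 * ε')).card ≤ 2) ∧
    (∀ j : Fin m, ∀ t t' : Fin n, f t = j → f t' = j → 2 / 3 + 4 * ε' < p t → t ≠ t' →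
        ¬ (1 / 3 + 2 * ε' < p t')) ∧
    ((Finset.univ.filter
        (fun t => 1 / 3 + 2 * ε' < p t ∧ p t ≤ 2 / 3 + 4 * ε')).card + 1) / 2 +
      (Finset.univ.filter (fun t => 2 / 3 + 4 * ε' < p t)).card ≤ m :=
  stmt8_general ε' h1 m n p hp f hmakespan
end

section
/- Let 0 < ε' ≤ 1/8 and l ≥ 1 be an integer. Set μ = ⌈((1+ε')/(1+2ε'))·m⌉ and κ = ⌈2·(2 + 1/ε')·(2l−1)⌉. If m ≥ 2l/(ε')², then κ·⌊(m−μ)/(2l−1)⌋ ≥ m. -/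
theorem stmt9 (ε' : ℝ) (h1 : 0 < ε') (h2 : ε' ≤ 1 / 8) (l m : ℕ) (hl : 1 ≤ l)
    (hm : 2 * (l : ℝ) / ε' ^ 2 ≤ (m : ℝ))
    (μ κ : ℕ)
    (hμ : μ = ⌈((1 + ε') / (1 + 2 * ε')) * (m : ℝ)⌉₊)
    (hκ : κ = ⌈2 * (2 + 1 / ε') * (2 * (l : ℝ) - 1)⌉₊) :
    m ≤ κ * ((m - μ) / (2 * l - 1)) := by
  have hε1 : (0:ℝ) < 1 + 2*ε' := by linarith
  have hL1 : (1:ℝ) ≤ (l:ℝ) := by exact_mod_cast hl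
  have hM0 : (0:ℝ) ≤ (m:ℝ) := Nat.cast_nonneg m
  set q := (m - μ) / (2 * l - 1) with hq
  clear_value q
  have hDpos : 0 < 2*l - 1 := by omega
  -- μ upper bound
  have hμle : (μ:ℝ) ≤ (1+ε')/(1+2*ε') * m + 1 := by
    rw [hμ]
    have hx : (0:ℝ) ≤ ((1+ε')/(1+2*ε')) * m := by positivity
    have := Nat.ceil_lt_add_one hx
    linarith
  have hA' : (μ:ℝ)*(1+2*ε') ≤ (1+ε')*m + (1+2*ε') := by
    have h2' := mul_le_mul_of_nonneg_right hμle (le_of_lt hε1)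
    have h3 : ((1+ε')/(1+2*ε')*m + 1)*(1+2*ε') = (1+ε')*(m:ℝ) + (1+2*ε') := by
      field_simp
    linarith
  -- κ lower bound
  have hκge : 2*(2+1/ε')*(2*(l:ℝ)-1) ≤ (κ:ℝ) := by rw [hκ]; exact Nat.le_ceil _
  have hB' : 2*(2*ε'+1)*(2*(l:ℝ)-1) ≤ ε' * κ := by
    have h3 : (2*(2+1/ε')*(2*(l:ℝ)-1)) * ε' = 2*(2*ε'+1)*(2*(l:ℝ)-1) := by
      field_simp
    have := mul_le_mul_of_nonneg_right hκge (le_of_lt h1)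
    nlinarith
  -- m lower bound
  have hD' : 2*(l:ℝ) ≤ ε'^2 * m := by
    have := (div_le_iff₀ (by positivity : (0:ℝ) < ε'^2)).1 hm
    linarith
  -- division facts
  have hcast : ((m-μ:ℕ):ℝ) < (2*(l:ℝ)-1) * (q+1) := by
    have hdm := Nat.div_add_mod (m-μ) (2*l-1)
    rw [← hq] at hdm
    have hml := Nat.mod_lt (m-μ) hDpos
    have hn : (m-μ:ℕ) < (2*l-1)*(q+1) := by
      calc m - μ = (2*l-1)*q + (m-μ)%(2*l-1) := hdm.symm
        _ < (2*l-1)*q + (2*l-1) := Nat.add_lt_add_left hml _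
        _ = (2*l-1)*(q+1) := by ring
    have := (Nat.cast_lt (α:=ℝ)).2 hn
    push_cast [Nat.cast_sub (by omega : 1 ≤ 2*l)] at this ⊢
    convert this using 2 <;> push_cast <;> ring
  have hsub : (m:ℝ) - μ ≤ ((m-μ:ℕ):ℝ) := by
    have hn : m ≤ (m - μ) + μ := by omega
    have := (Nat.cast_le (α:=ℝ)).2 hn
    push_cast at this
    linarith
  have hQ0 : (0:ℝ) ≤ (q:ℝ) := Nat.cast_nonneg _
  have c0 : (m:ℝ) - μ ≤ (2*(l:ℝ)-1)*q + (2*(l:ℝ)-1) := by nlinarith [hcast, hsub]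
  have c1 : ε'*m - (1+2*ε')*(2*(l:ℝ)) ≤ (1+2*ε')*((2*(l:ℝ)-1)*q) := by
    have := mul_le_mul_of_nonneg_left c0 (le_of_lt hε1)
    nlinarith [hA']
  have c2 : 2*(2*ε'+1)*(ε'*m - (1+2*ε')*(2*(l:ℝ))) ≤ (1+2*ε')*(ε'*((κ:ℝ)*q)) := by
    have hb := mul_le_mul_of_nonneg_right hB' hQ0
    have hb2 := mul_le_mul_of_nonneg_left hb (le_of_lt hε1)
    have hc := mul_le_mul_of_nonneg_left c1 (by positivity : (0:ℝ) ≤ 2*(2*ε'+1))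
    linarith [hb2, hc]
  have hD3 : 2*(2*ε'+1)^2 * (2*(l:ℝ)) ≤ 2*(2*ε'+1)^2 * (ε'^2 * m) :=
    mul_le_mul_of_nonneg_left hD' (by positivity)
  have hnn : (0:ℝ) ≤ ((1+2*ε')*ε'*(m:ℝ)) * (1 - 2*(1+2*ε')*ε') := by
    have h4 : (0:ℝ) ≤ 1 - 2*(1+2*ε')*ε' := by
      have := mul_le_mul_of_nonneg_left h2 (le_of_lt h1)
      linarith
    have h5 : (0:ℝ) ≤ (1+2*ε')*ε'*(m:ℝ) := by positivity
    exact mul_nonneg h5 h4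
  have e1 : ((1+2*ε')*ε') * (m:ℝ) ≤ ((1+2*ε')*ε') * ((κ:ℝ)*q) := by linarith [c2, hD3, hnn]
  have final : (m:ℝ) ≤ (κ:ℝ) * q :=
    le_of_mul_le_mul_left (by linarith [e1]) (by positivity : (0:ℝ) < (1+2*ε')*ε')
  have := final
  rw [show ((κ:ℝ) * q) = ((κ * q : ℕ):ℝ) by push_cast; ring] at this
  exact_mod_cast this
end

section
/- Let m ≥ 1, 0 < ε' ≤ 1/8, l ≥ 1, and μ = ⌈((1+ε')/(1+2ε'))·m⌉. Suppose n₁, …, n_{2l−1} are nonnegative integers with ⌈(∑_{i=1}^{l} n_i)/2⌉ + ∑_{i=l+1}^{2l−1} n_i ≤ m, and m ≥ 2l/(ε')². Set m₀ = ⌊(m−μ)/(2l−1)⌋, u_i = ⌊n_i/(2m₀)⌋ for 1 ≤ i ≤ l, and u_i = ⌊n_i/m₀⌋ for l+1 ≤ i ≤ 2l−1. Then each u_i ≤ ⌈2(2+1/ε')(2l−1)⌉, and if μ' := ∑_i u_i·m₀ < μ, then ⌈(∑_{i=1}^{l} n_i − 2∑_{i=1}^{l} u_i m₀)/2⌉ +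 ∑_{i=l+1}^{2l−1}(n_i − u_i m₀) ≤ m − μ. -/
/-!
Rounding down loses less than `m₀` jobs per class (less than `2 m₀` for the first `l` classes,
whose jobs go two per machine), so the leftover load is at most `(2l - 1) m₀ ≤ m - μ`.
The bound `u i ≤ κ` follows from `m ≤ κ m₀`: the reserve `m - μ` is about `ε' m / (1 + 2ε')`,
and once `m ≥ 2l / ε'²` this dominates the `2l - 1` lost when rounding `m₀` down.
-/

open Finset

lemma le_mul_sub_ceil_sub {ε m l : ℝ} (hε : 0 < ε) (hε8 : ε ≤ 1 / 8) (hl : 0 ≤ l)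
    (hm : 2 * l / ε ^ 2 ≤ m) :
    m ≤ 2 * (2 + 1 / ε) * (m - ⌈(1 + ε) / (1 + 2 * ε) * m⌉₊ - (2 * l - 1)) := by
  have hm0 : 0 ≤ m := (by positivity : (0 : ℝ) ≤ 2 * l / ε ^ 2).trans hm
  set μ : ℝ := ((⌈(1 + ε) / (1 + 2 * ε) * m⌉₊ : ℕ) : ℝ)
  have hμ : (1 + 2 * ε) * μ < (1 + ε) * m + (1 + 2 * ε) := by
    have h := Nat.ceil_lt_add_one (by positivity : 0 ≤ (1 + ε) / (1 + 2 * ε) * m)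
    refine (mul_lt_mul_of_pos_left h (by positivity)).trans_eq ?_
    field_simp
  have hεm : 16 * l ≤ ε * m := by
    have h2l : 2 * l ≤ ε ^ 2 * m := by rwa [div_le_iff₀' (by positivity)] at hm
    nlinarith
  rw [← mul_le_mul_iff_of_pos_left hε]
  have hexpand : ε * (2 * (2 + 1 / ε) * (m - μ - (2 * l - 1)))
      = 2 * ((1 + 2 * ε) * (m - μ - (2 * l - 1))) := by
    field_simp
    ring
  rw [hexpand]
  nlinarith

lemma le_ceil_mul_mul_div {x K : ℝ} {N c : ℕ} (hK : 0 ≤ K) (hc : 0 < c) (h : x ≤ K * (N - c)) :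
    x ≤ ⌈K * c⌉₊ * (N / c : ℕ) := by
  have hN : (N : ℝ) < c * (N / c : ℕ) + c := by
    exact_mod_cast (Nat.lt_mul_div_succ N hc).trans_eq (by ring)
  calc x ≤ K * (N - c) := h
    _ ≤ K * c * (N / c : ℕ) := by rw [mul_assoc]; gcongr; linarith
    _ ≤ ⌈K * c⌉₊ * (N / c : ℕ) := by gcongr; exact Nat.le_ceil _

lemma le_ceil_mul_reserve_div {ε : ℝ} {m l : ℕ} (hε : 0 < ε) (hε8 : ε ≤ 1 / 8) (hl : 1 ≤ l)
    (hm : 2 * (l : ℝ) / ε ^ 2 ≤ m) :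
    m ≤ ⌈2 * (2 + 1 / ε) * (2 * (l : ℝ) - 1)⌉₊ *
      ((m - ⌈(1 + ε) / (1 + 2 * ε) * (m : ℝ)⌉₊) / (2 * l - 1)) := by
  set μ := ⌈(1 + ε) / (1 + 2 * ε) * (m : ℝ)⌉₊
  have hc : ((2 * l - 1 : ℕ) : ℝ) = 2 * (l : ℝ) - 1 := by
    rw [Nat.cast_sub (by omega)]; push_cast; ring
  have hsub : (m : ℝ) - μ ≤ ((m - μ : ℕ) : ℝ) :=
    sub_le_iff_le_add.2 (by exact_mod_cast le_tsub_add)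
  have h := le_ceil_mul_mul_div (x := m) (K := 2 * (2 + 1 / ε)) (N := m - μ) (c := 2 * l - 1)
    (by positivity) (by omega) ((le_mul_sub_ceil_sub hε hε8 (by positivity) hm).trans
      (mul_le_mul_of_nonneg_left (by rw [hc]; linarith) (by positivity)))
  rw [hc] at h
  exact_mod_cast h

lemma sum_add_card_le_sum {ι : Type*} {s : Finset ι} {f g : ι → ℕ} (h : ∀ i ∈ s, f i < g i) :
    ∑ i ∈ s, f i + #s ≤ ∑ i ∈ s, g i := by
  simpa [sum_add_distrib] using sum_le_sum (f := fun i => f i + 1) h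

lemma sum_add_card_le_of_forall_eq_div_two_mul {ι : Type*} {s : Finset ι} {n u : ι → ℕ} {d : ℕ}
    (hd : 0 < d) (hu : ∀ i ∈ s, u i = n i / (2 * d)) :
    ∑ i ∈ s, n i + #s ≤ 2 * ∑ i ∈ s, u i * d + 2 * (#s * d) :=
  calc ∑ i ∈ s, n i + #s ≤ ∑ i ∈ s, (2 * (u i * d) + 2 * d) := sum_add_card_le_sum fun i hi => by
        rw [hu i hi]
        exact (Nat.lt_mul_div_succ (n i) (by omega : 0 < 2 * d)).trans_eq (by ring)
    _ = 2 * ∑ i ∈ s, u i * d + 2 * (#s * d) := by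
        simp only [sum_add_distrib, ← mul_sum, sum_const, smul_eq_mul]

lemma sum_sub_mul_add_card_le_of_forall_eq_div {ι : Type*} {s : Finset ι} {n u : ι → ℕ} {d : ℕ}
    (hd : 0 < d) (hu : ∀ i ∈ s, u i = n i / d) :
    ∑ i ∈ s, (n i - u i * d) + #s ≤ #s * d :=
  calc ∑ i ∈ s, (n i - u i * d) + #s ≤ ∑ _i ∈ s, d := sum_add_card_le_sum fun i hi => by
        rw [hu i hi, ← Nat.mod_eq_sub_div_mul]
        exact Nat.mod_lt _ hd
    _ = #s * d := by rw [sum_const, smul_eq_mul]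

theorem stmt11 (ε' : ℝ) (h1 : 0 < ε') (h2 : ε' ≤ 1 / 8)
    (m l : ℕ) (hm1 : 1 ≤ m) (hl : 1 ≤ l)
    (hm : 2 * (l : ℝ) / ε' ^ 2 ≤ (m : ℝ))
    (μ : ℕ) (hμ : μ = ⌈((1 + ε') / (1 + 2 * ε')) * (m : ℝ)⌉₊)
    (n : ℕ → ℕ)
    (hjobs : ((∑ i ∈ Finset.Icc 1 l, n i) + 1) / 2
      + ∑ i ∈ Finset.Icc (l + 1) (2 * l - 1), n i ≤ m)
    (m₀ : ℕ) (hm₀ : m₀ = (m - μ) / (2 * l - 1))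
    (u : ℕ → ℕ)
    (hu1 : ∀ i ∈ Finset.Icc 1 l, u i = n i / (2 * m₀))
    (hu2 : ∀ i ∈ Finset.Icc (l + 1) (2 * l - 1), u i = n i / m₀) :
    (∀ i ∈ Finset.Icc 1 (2 * l - 1), u i ≤ ⌈2 * (2 + 1 / ε') * (2 * (l : ℝ) - 1)⌉₊) ∧
    (∑ i ∈ Finset.Icc 1 (2 * l - 1), u i * m₀ < μ →
      ((∑ i ∈ Finset.Icc 1 l, n i - 2 * ∑ i ∈ Finset.Icc 1 l, u i * m₀) + 1) / 2
        + ∑ i ∈ Finset.Icc (l + 1) (2 * l - 1), (n i - u i * m₀) ≤ m - μ) := by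
  set κ := ⌈2 * (2 + 1 / ε') * (2 * (l : ℝ) - 1)⌉₊
  have hκ : m ≤ κ * m₀ := by subst hμ hm₀; exact le_ceil_mul_reserve_div h1 h2 hl hm
  have hm₀pos : 0 < m₀ := Nat.pos_of_ne_zero fun h => by rw [h, mul_zero] at hκ; omega
  refine ⟨fun i hi => ?_, fun _ => ?_⟩
  · rcases le_or_gt i l with hil | hli
    · have hi1 : i ∈ Icc 1 l := mem_Icc.2 ⟨(mem_Icc.1 hi).1, hil⟩
      have hni := single_le_sum (fun j _ => Nat.zero_le (n j)) hi1
      rw [hu1 i hi1]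
      refine Nat.div_le_of_le_mul ?_
      calc n i ≤ 2 * m := by omega
        _ ≤ 2 * m₀ * κ := by rw [mul_assoc, mul_comm m₀]; exact Nat.mul_le_mul_left 2 hκ
    · have hi2 : i ∈ Icc (l + 1) (2 * l - 1) := mem_Icc.2 ⟨hli, (mem_Icc.1 hi).2⟩
      have hni := single_le_sum (fun j _ => Nat.zero_le (n j)) hi2
      rw [hu2 i hi2]
      exact Nat.div_le_of_le_mul ((show n i ≤ m by omega).trans (mul_comm κ m₀ ▸ hκ))
  · have hS1 := sum_add_card_le_of_forall_eq_div_two_mul hm₀pos hu1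
    have hS2 := sum_sub_mul_add_card_le_of_forall_eq_div hm₀pos hu2
    rw [Nat.card_Icc, add_tsub_cancel_right] at hS1
    rw [Nat.card_Icc, show 2 * l - 1 + 1 - (l + 1) = l - 1 by omega] at hS2
    have hreserve : l * m₀ + (l - 1) * m₀ ≤ m - μ := by
      rw [← add_mul, show l + (l - 1) = 2 * l - 1 by omega, hm₀]
      exact Nat.mul_div_le _ _
    omega
end
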